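/- arXiv:2312.11411 — 2 statements merged into one kernel-verified Lean document; each statement's English description precedes it below -/
import Mathlib

section
/- On a weak nearly Sasakian manifold M^{2n+1}(φ,Q,ξ,η,g), the Reeb vector field ξ is geodesic, i.e. ∇_ξ ξ = 0; moreover, if condition (4) holds, then ∇_ξ Q̃ = 0, i.e. (∇_ξ Q̃)X = 0 for every vector field X. -/
/-- An abstract (Koszul-style) model of the algebra of smooth vector fields on a
`(2n+1)`-dimensional Riemannian manifold `M` carrying a weak nearly Sasakian
structure `(φ, Q, ξ, η, g)`: `VF` is the space of (smooth) vector fields, `fsmul`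
is multiplication of a vector field by a smooth function `M → ℝ`, `lie` is the
Lie bracket, `deriv X f` is the derivative of the function `f` in the direction of
the vector field `X`, `g` is the Riemannian metric, `cov` is its Levi-Civita
connection, and `frame` is an orthonormal frame (encoding that `dim M = 2n+1`).
The axioms are: `VF` is a module over functions, `deriv` is a derivation, `g` is a
symmetric positive definite function-bilinear form, `cov` is a torsion-free metric
connection, `φ` and `Q` are `(1,1)`-tensor fields with `Q` nonsingular, `η` is a
1-form, `φ² = -Q + η ⊗ ξ`, `η(ξ) = 1`, `Qξ = ξ`, `ker η` is `φ`-invariant,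
`g(φX, φY) = g(X, QY) - η(X)η(Y)`, and the nearly Sasakian condition
`(∇_Y φ)Y = g(Y,Y) ξ - η(Y) Y`. -/
structure WeakNearlySasakianManifold (M : Type*) (n : ℕ) where
  VF : Type*
  [instAddCommGroup : AddCommGroup VF]
  [instModule : Module ℝ VF]
  fsmul : (M → ℝ) → VF → VF
  lie : VF → VF → VF
  deriv : VF → (M → ℝ) → M → ℝ
  g : VF → VF → M → ℝ
  cov : VF → VF → VF
  phi : VF → VF
  Q : VF → VF
  xi : VF
  eta : VF → M → ℝ
  frame : Fin (2 * n + 1) → VF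
  npos : 1 ≤ n
  -- `fsmul` makes `VF` a module over the smooth functions
  fsmul_one : ∀ X, fsmul 1 X = X
  fsmul_add : ∀ f X Y, fsmul f (X + Y) = fsmul f X + fsmul f Y
  add_fsmul : ∀ f₁ f₂ X, fsmul (f₁ + f₂) X = fsmul f₁ X + fsmul f₂ X
  mul_fsmul : ∀ f₁ f₂ X, fsmul (f₁ * f₂) X = fsmul f₁ (fsmul f₂ X)
  fsmul_const : ∀ (c : ℝ) X, fsmul (fun _ => c) X = c • X
  -- `deriv` is a derivation in the function, tensorial in the vector field
  deriv_add : ∀ X f₁ f₂, deriv X (f₁ + f₂) = deriv X f₁ + deriv X f₂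
  deriv_mul : ∀ X f₁ f₂, deriv X (f₁ * f₂) = f₁ * deriv X f₂ + f₂ * deriv X f₁
  deriv_const : ∀ X (c : ℝ), deriv X (fun _ => c) = 0
  deriv_add_vf : ∀ X Y f, deriv (X + Y) f = deriv X f + deriv Y f
  deriv_fsmul : ∀ f X k, deriv (fsmul f X) k = f * deriv X k
  -- the Lie bracket
  lie_antisymm : ∀ X Y, lie X Y = -lie Y X
  lie_add_right : ∀ X Y Z, lie X (Y + Z) = lie X Y + lie X Z
  lie_leibniz : ∀ X f Y, lie X (fsmul f Y) = fsmul f (lie X Y) + fsmul (deriv X f) Y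
  -- the Riemannian metric
  g_symm : ∀ X Y, g X Y = g Y X
  g_add_left : ∀ X Y Z, g (X + Y) Z = g X Z + g Y Z
  g_fsmul_left : ∀ f X Y, g (fsmul f X) Y = f * g X Y
  g_nonneg : ∀ X p, 0 ≤ g X X p
  g_nondegenerate : ∀ X, g X X = 0 → X = 0
  -- the Levi-Civita connection
  cov_add_left : ∀ X Y Z, cov (X + Y) Z = cov X Z + cov Y Z
  cov_add_right : ∀ X Y Z, cov X (Y + Z) = cov X Y + cov X Z
  cov_fsmul_left : ∀ f X Y, cov (fsmul f X) Y = fsmul f (cov X Y)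
  cov_leibniz : ∀ f X Y, cov X (fsmul f Y) = fsmul f (cov X Y) + fsmul (deriv X f) Y
  cov_torsion_free : ∀ X Y, cov X Y - cov Y X = lie X Y
  cov_metric : ∀ X Y Z, deriv X (g Y Z) = g (cov X Y) Z + g Y (cov X Z)
  -- `φ`, `Q` are `(1,1)`-tensor fields, `Q` nonsingular, `η` is a 1-form
  phi_add : ∀ X Y, phi (X + Y) = phi X + phi Y
  phi_fsmul : ∀ f X, phi (fsmul f X) = fsmul f (phi X)
  Q_add : ∀ X Y, Q (X + Y) = Q X + Q Y
  Q_fsmul : ∀ f X, Q (fsmul f X) = fsmul f (Q X)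
  Q_bijective : Function.Bijective Q
  eta_add : ∀ X Y, eta (X + Y) = eta X + eta Y
  eta_fsmul : ∀ f X, eta (fsmul f X) = f * eta X
  -- the weak almost contact metric conditions
  phi_phi : ∀ X, phi (phi X) = -Q X + fsmul (eta X) xi
  eta_xi : eta xi = 1
  Q_xi : Q xi = xi
  phi_invariant : ∀ X, eta X = 0 → eta (phi X) = 0
  metric_compat : ∀ X Y, g (phi X) (phi Y) = g X (Q Y) - eta X * eta Y
  -- an orthonormal frame: `M` has dimension `2 * n + 1`
  frame_orthonormal : ∀ i j, g (frame i) (frame j) = fun _ => if i = j then (1 : ℝ) else 0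
  frame_spanning : ∀ X, ∃ c : Fin (2 * n + 1) → M → ℝ, X = ∑ i, fsmul (c i) (frame i)
  -- the weak nearly Sasakian condition `(∇_Y φ)Y = g(Y,Y) ξ - η(Y) Y`
  nearlySasakian : ∀ Y, cov Y (phi Y) - phi (cov Y Y) = fsmul (g Y Y) xi - fsmul (eta Y) Y

attribute [instance] WeakNearlySasakianManifold.instAddCommGroup
attribute [instance] WeakNearlySasakianManifold.instModule

namespace WeakNearlySasakianManifold

variable {M : Type*} {n : ℕ} (S : WeakNearlySasakianManifold M n)

/-- `(∇_X φ) Y` -/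
def covPhi (X Y : S.VF) : S.VF := S.cov X (S.phi Y) - S.phi (S.cov X Y)

/-- the tensor `Q̃ = Q - id` -/
def Qt (X : S.VF) : S.VF := S.Q X - X

/-- `(∇_X Q̃) Y` -/
def covQt (X Y : S.VF) : S.VF := S.cov X (S.Qt Y) - S.Qt (S.cov X Y)

/-- the tensor `h = ∇ξ + φ` -/
def h (X : S.VF) : S.VF := S.cov X S.xi + S.phi X

/-- `(∇_X h) Y` -/
def covh (X Y : S.VF) : S.VF := S.cov X (S.h Y) - S.h (S.cov X Y)

/-- the tensor `(h - φ)` -/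
def hmphi (X : S.VF) : S.VF := S.h X - S.phi X

/-- `(∇_X (h - φ)) Y` -/
def covhmphi (X Y : S.VF) : S.VF := S.cov X (S.hmphi Y) - S.hmphi (S.cov X Y)

/-- the Riemann curvature tensor `R_{X,Y} Z = ∇_X ∇_Y Z - ∇_Y ∇_X Z - ∇_{[X,Y]} Z` -/
def R (X Y Z : S.VF) : S.VF :=
  S.cov X (S.cov Y Z) - S.cov Y (S.cov X Z) - S.cov (S.lie X Y) Z

/-- Condition (4): `(∇_X Q̃) Y = 0` for every vector field `X` and every `Y ∈ ker η`. -/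
def Cond4 : Prop := ∀ X Y : S.VF, S.eta Y = 0 → S.covQt X Y = 0

/-- Condition (5): `R_{Q̃X, Y} Z ∈ ker η` for every vector field `X` and all `Y, Z ∈ ker η`. -/
def Cond5 : Prop :=
  ∀ X Y Z : S.VF, S.eta Y = 0 → S.eta Z = 0 → S.eta (S.R (S.Qt X) Y Z) = 0

/-- the trace of a `(1,1)`-tensor field -/
def trace (A : S.VF → S.VF) : M → ℝ := ∑ i, S.g (A (S.frame i)) (S.frame i)

/-- the Ricci tensor `Ric(X,Y) = Σᵢ g(R_{Eᵢ,X} Y, Eᵢ)` -/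
def Ric (X Y : S.VF) : M → ℝ := ∑ i, S.g (S.R (S.frame i) X Y) (S.frame i)

end WeakNearlySasakianManifold

/-!
Since `Q` is injective and `φ² = -Q + η ⊗ ξ`, the kernel of `φ` is spanned by `ξ`; in particular
`φξ = 0`, hence `g(·, ξ) = η` and `g(ξ, ξ) = 1`. The nearly Sasakian identity at `Y = ξ` then reads
`φ(∇_ξ ξ) = 0`, and differentiating `g(ξ, ξ) = 1` gives `η(∇_ξ ξ) = 0`, so `∇_ξ ξ = 0`.
For the second claim split `X = (X - η(X)ξ) + η(X)ξ`: condition (4) kills the horizontal part, and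
on `fξ` both terms of `(∇_ξ Q̃)(fξ)` vanish because `Q̃ξ = 0` and `∇_ξ(fξ) = ξ(f) ξ`.
-/

namespace WeakNearlySasakianManifold

section

variable {M : Type*} {n : ℕ} (S : WeakNearlySasakianManifold M n)

lemma fsmul_zero (f : M → ℝ) : S.fsmul f 0 = 0 :=
  map_zero (AddMonoidHom.mk' (S.fsmul f) (S.fsmul_add f))

lemma zero_fsmul (X : S.VF) : S.fsmul 0 X = 0 := by
  rw [show (0 : M → ℝ) = fun _ => (0 : ℝ) from rfl, S.fsmul_const, zero_smul]

lemma phi_zero : S.phi 0 = 0 :=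
  map_zero (AddMonoidHom.mk' S.phi S.phi_add)

lemma eta_zero : S.eta 0 = 0 :=
  map_zero (AddMonoidHom.mk' S.eta S.eta_add)

lemma cov_zero_right (X : S.VF) : S.cov X 0 = 0 :=
  map_zero (AddMonoidHom.mk' (S.cov X) (S.cov_add_right X))

lemma g_zero_right (X : S.VF) : S.g X 0 = 0 := by
  rw [S.g_symm]
  exact map_zero (AddMonoidHom.mk' (S.g · X) (fun A B => S.g_add_left A B X))

lemma eq_eta_fsmul_xi_of_phi_eq_zero {Y : S.VF} (hY : S.phi Y = 0) :
    Y = S.fsmul (S.eta Y) S.xi := by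
  have hQY : S.Q Y = S.fsmul (S.eta Y) S.xi := by
    have := S.phi_phi Y
    rw [hY, S.phi_zero] at this
    exact neg_add_eq_zero.mp this.symm
  exact S.Q_bijective.injective (by rw [hQY, S.Q_fsmul, S.Q_xi])

lemma phi_xi : S.phi S.xi = 0 := by
  have hphi2 : S.phi (S.phi S.xi) = 0 := by
    rw [S.phi_phi, S.Q_xi, S.eta_xi, S.fsmul_one, neg_add_cancel]
  set c := S.eta (S.phi S.xi)
  have hc : S.phi S.xi = S.fsmul c S.xi := S.eq_eta_fsmul_xi_of_phi_eq_zero hphi2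
  have hcc : c * c = 0 := by
    have := congrArg S.eta hphi2
    rwa [hc, S.phi_fsmul, hc, S.eta_fsmul, S.eta_fsmul, S.eta_xi, mul_one, S.eta_zero] at this
  have hc0 : c = 0 := funext fun p => mul_self_eq_zero.mp (congrFun hcc p)
  rw [hc, hc0, S.zero_fsmul]

lemma g_xi (X : S.VF) : S.g X S.xi = S.eta X := by
  have h := S.metric_compat X S.xi
  rw [S.phi_xi, S.g_zero_right, S.Q_xi, S.eta_xi, mul_one] at h
  exact sub_eq_zero.mp h.symm

lemma g_xi_xi : S.g S.xi S.xi = 1 := by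
  rw [S.g_xi, S.eta_xi]

lemma eta_cov_xi (X : S.VF) : S.eta (S.cov X S.xi) = 0 := by
  have h := S.cov_metric X S.xi S.xi
  rw [S.g_xi_xi, show (1 : M → ℝ) = fun _ => (1 : ℝ) from rfl, S.deriv_const, S.g_symm S.xi,
    ← two_mul, S.g_xi] at h
  exact funext fun p => by simpa using congrFun h p

lemma phi_cov_xi_xi : S.phi (S.cov S.xi S.xi) = 0 := by
  have h := S.nearlySasakian S.xi
  rw [S.phi_xi, S.cov_zero_right, S.g_xi_xi, S.eta_xi, S.fsmul_one, sub_self, zero_sub] at h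
  exact neg_eq_zero.mp h

lemma cov_xi_xi : S.cov S.xi S.xi = 0 := by
  rw [S.eq_eta_fsmul_xi_of_phi_eq_zero S.phi_cov_xi_xi, S.eta_cov_xi, S.zero_fsmul]

lemma Qt_add (X Y : S.VF) : S.Qt (X + Y) = S.Qt X + S.Qt Y := by
  simp only [Qt, S.Q_add]
  abel

lemma Qt_fsmul_xi (f : M → ℝ) : S.Qt (S.fsmul f S.xi) = 0 := by
  rw [Qt, S.Q_fsmul, S.Q_xi, sub_self]

lemma covQt_add_right (X Y Z : S.VF) : S.covQt X (Y + Z) = S.covQt X Y + S.covQt X Z := by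
  simp only [covQt, S.Qt_add, S.cov_add_right]
  abel

lemma covQt_xi_fsmul_xi (f : M → ℝ) : S.covQt S.xi (S.fsmul f S.xi) = 0 := by
  rw [covQt, S.cov_leibniz, S.cov_xi_xi, S.fsmul_zero, zero_add, S.Qt_fsmul_xi, S.Qt_fsmul_xi,
    S.cov_zero_right, sub_self]

lemma eta_sub_fsmul_eta_xi (X : S.VF) : S.eta (X - S.fsmul (S.eta X) S.xi) = 0 := by
  have h := S.eta_add (X - S.fsmul (S.eta X) S.xi) (S.fsmul (S.eta X) S.xi)
  rwa [sub_add_cancel, S.eta_fsmul, S.eta_xi, mul_one, right_eq_add] at h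

end

/-- On a weak nearly Sasakian manifold the Reeb field `ξ` is geodesic, `∇_ξ ξ = 0`;
moreover, under condition (4), `∇_ξ Q̃ = 0`, i.e. `(∇_ξ Q̃) X = 0` for every `X`. -/
theorem xi_geodesic_and_nabla_xi_Qt_eq_zero {M : Type*} {n : ℕ}
    (S : WeakNearlySasakianManifold M n) :
    S.cov S.xi S.xi = 0 ∧ (S.Cond4 → ∀ X : S.VF, S.covQt S.xi X = 0) := by
  refine ⟨S.cov_xi_xi, fun h4 X => ?_⟩
  rw [← sub_add_cancel X (S.fsmul (S.eta X) S.xi), S.covQt_add_right,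
    h4 S.xi _ (S.eta_sub_fsmul_eta_xi X), S.covQt_xi_fsmul_xi, add_zero]

end WeakNearlySasakianManifold
end

section
/- On a weak nearly Sasakian manifold M^{2n+1}(φ,Q,ξ,η,g) satisfying condition (4), the tensor h = ∇ξ + φ is skew-symmetric (g(hX, X) = 0 for all X), satisfies hξ = 0 and η∘h = 0, the covariant derivative of η is given by (∇_X η)(Y) = g((h-φ)X, Y) for all vector fields X, Y, and η is a Killing 1-form, i.e. (∇_X η)(X) = 0 for all vector fields X. -/
namespace WeakNearlySasakianManifold

section

variable {M : Type*} {n : ℕ} (S : WeakNearlySasakianManifold M n)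

lemma g_add_right (X Y Z : S.VF) : S.g X (Y + Z) = S.g X Y + S.g X Z := by
  rw [S.g_symm X, S.g_add_left, S.g_symm Y, S.g_symm Z]

lemma g_sub_left (X Y Z : S.VF) : S.g (X - Y) Z = S.g X Z - S.g Y Z :=
  (AddMonoidHom.mk' (S.g · Z) (S.g_add_left · · Z)).map_sub X Y

lemma g_neg_right (X Y : S.VF) : S.g X (-Y) = -S.g X Y := by
  rw [S.g_symm, S.g_symm X]
  exact (AddMonoidHom.mk' (S.g · X) (S.g_add_left · · X)).map_neg Y

lemma g_fsmul_right (f : M → ℝ) (X Y : S.VF) : S.g X (S.fsmul f Y) = f * S.g X Y := by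
  rw [S.g_symm, S.g_fsmul_left, S.g_symm]

lemma phi_neg (X : S.VF) : S.phi (-X) = -S.phi X := (AddMonoidHom.mk' S.phi S.phi_add).map_neg X

lemma phi_sub (X Y : S.VF) : S.phi (X - Y) = S.phi X - S.phi Y :=
  (AddMonoidHom.mk' S.phi S.phi_add).map_sub X Y

lemma Q_zero : S.Q 0 = 0 := (AddMonoidHom.mk' S.Q S.Q_add).map_zero

lemma Q_sub (X Y : S.VF) : S.Q (X - Y) = S.Q X - S.Q Y :=
  (AddMonoidHom.mk' S.Q S.Q_add).map_sub X Y

lemma eta_sub (X Y : S.VF) : S.eta (X - Y) = S.eta X - S.eta Y :=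
  (AddMonoidHom.mk' S.eta S.eta_add).map_sub X Y

lemma cov_sub_right (X Y Z : S.VF) : S.cov X (Y - Z) = S.cov X Y - S.cov X Z :=
  (AddMonoidHom.mk' (S.cov X) (S.cov_add_right X)).map_sub Y Z

lemma fsmul_sub (f : M → ℝ) (X Y : S.VF) : S.fsmul f (X - Y) = S.fsmul f X - S.fsmul f Y :=
  (AddMonoidHom.mk' (S.fsmul f) (S.fsmul_add f)).map_sub X Y

lemma deriv_sub (X : S.VF) (f k : M → ℝ) : S.deriv X (f - k) = S.deriv X f - S.deriv X k := by
  have hneg : S.deriv X (-k) = -S.deriv X k := by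
    have hc : S.deriv X (-1) = 0 := S.deriv_const X (-1)
    rw [show -k = -1 * k by ring, S.deriv_mul, hc]
    ring
  rw [sub_eq_add_neg, S.deriv_add, hneg, sub_eq_add_neg]

lemma g_Q_right (X Y : S.VF) : S.g X (S.Q Y) = S.g (S.Q X) Y := by
  have hXY := S.metric_compat X Y
  have hYX := S.metric_compat Y X
  rw [S.g_symm (S.phi Y), S.g_symm Y] at hYX
  linear_combination hYX - hXY

lemma eta_eq_g_xi (X : S.VF) : S.eta X = S.g X S.xi := by
  have h := S.metric_compat X S.xi
  rw [S.phi_xi, S.g_zero_right, S.Q_xi, S.eta_xi, mul_one] at h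
  linear_combination h

lemma eta_phi (X : S.VF) : S.eta (S.phi X) = 0 := by
  have hφ : S.phi X = S.phi (X - S.fsmul (S.eta X) S.xi) := by
    rw [S.phi_sub, S.phi_fsmul, S.phi_xi, S.fsmul_zero, sub_zero]
  rw [hφ]
  exact S.phi_invariant _ (by rw [S.eta_sub, S.eta_fsmul, S.eta_xi, mul_one, sub_self])

lemma phi_Q_comm (X : S.VF) : S.phi (S.Q X) = S.Q (S.phi X) := by
  have h₁ := S.phi_phi (S.phi X)
  rw [S.eta_phi, S.zero_fsmul, add_zero] at h₁
  have h₂ := congrArg S.phi (S.phi_phi X)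
  rw [S.phi_add, S.phi_neg, S.phi_fsmul, S.phi_xi, S.fsmul_zero, add_zero] at h₂
  exact neg_inj.mp (h₂.symm.trans h₁)

lemma g_phi_left (X Y : S.VF) : S.g (S.phi X) Y = -S.g X (S.phi Y) := by
  obtain ⟨Z, rfl⟩ := S.Q_bijective.2 Y
  have h := S.metric_compat X (S.phi Z)
  rw [S.phi_phi, S.eta_phi, mul_zero, sub_zero, S.g_add_right, S.g_neg_right, S.g_fsmul_right,
    ← S.eta_eq_g_xi, S.eta_phi, mul_zero, add_zero] at h
  rw [S.phi_Q_comm, ← h, neg_neg]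

lemma g_phi_self (X : S.VF) : S.g (S.phi X) X = 0 :=
  self_eq_neg.mp ((S.g_phi_left X X).trans (by rw [S.g_symm]))

lemma deriv_eta (Z X : S.VF) :
    S.deriv Z (S.eta X) = S.eta (S.cov Z X) + S.g X (S.cov Z S.xi) := by
  rw [S.eta_eq_g_xi, S.eta_eq_g_xi, S.cov_metric]

lemma covPhi_add_covPhi (X Y : S.VF) :
    S.covPhi X Y + S.covPhi Y X =
      S.fsmul (S.g X Y) S.xi + S.fsmul (S.g Y X) S.xi
        - S.fsmul (S.eta X) Y - S.fsmul (S.eta Y) X := by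
  have hXY := S.nearlySasakian (X + Y)
  have hX := S.nearlySasakian X
  have hY := S.nearlySasakian Y
  simp only [S.phi_add, S.cov_add_left, S.cov_add_right, S.g_add_left, S.g_add_right, S.eta_add,
    S.add_fsmul, S.fsmul_add] at hXY
  unfold covPhi
  linear_combination (norm := module) hXY - hX - hY

lemma covPhi_xi_left (X : S.VF) :
    S.covPhi S.xi X = S.phi (S.cov X S.xi) + S.fsmul (S.eta X) S.xi - X := by
  have hX : S.covPhi X S.xi = -S.phi (S.cov X S.xi) := by
    rw [covPhi, S.phi_xi, S.cov_zero_right, zero_sub]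
  have h := S.covPhi_add_covPhi X S.xi
  rw [S.g_symm S.xi X, ← S.eta_eq_g_xi, S.eta_xi, S.fsmul_one] at h
  linear_combination (norm := module) h - hX

lemma g_Q_xi (X : S.VF) : S.g (S.Q X) S.xi = S.eta X := by
  rw [← S.g_Q_right, S.Q_xi, S.eta_eq_g_xi]

lemma g_Qt_xi (X : S.VF) : S.g (S.Qt X) S.xi = 0 := by
  rw [Qt, S.g_sub_left, S.g_Q_xi, S.eta_eq_g_xi, sub_self]

lemma cov_Q (h4 : S.Cond4) (Z X : S.VF) :
    S.cov Z (S.Q X) = S.Q (S.cov Z X) - S.fsmul (S.eta X) (S.Qt (S.cov Z S.xi)) := by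
  have hker : S.eta (X - S.fsmul (S.eta X) S.xi) = 0 := by
    rw [S.eta_sub, S.eta_fsmul, S.eta_xi, mul_one, sub_self]
  have h := h4 Z _ hker
  simp only [covQt, Qt, S.Q_sub, S.Q_add, S.Q_fsmul, S.Q_xi, S.cov_sub_right, S.cov_leibniz,
    S.fsmul_sub] at h ⊢
  linear_combination (norm := module) h

lemma g_Q_cov_xi (h4 : S.Cond4) (X : S.VF) :
    S.g (S.Q X) (S.cov X S.xi) = S.g X (S.cov X S.xi) := by
  have hm := S.cov_metric X (S.Q X) S.xi
  rw [S.g_Q_xi, S.cov_Q h4, S.g_sub_left, S.g_fsmul_left, S.g_Q_xi, S.g_Qt_xi] at hm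
  linear_combination S.deriv_eta X X - hm

lemma g_covPhi_xi_phi (h4 : S.Cond4) (X : S.VF) : S.g (S.covPhi S.xi X) (S.phi X) = 0 := by
  have hQ : S.cov S.xi (S.Q X) = S.Q (S.cov S.xi X) := by
    rw [S.cov_Q h4, S.cov_xi_xi, Qt, S.Q_zero, sub_zero, S.fsmul_zero, sub_zero]
  have hφ := S.cov_metric S.xi (S.phi X) (S.phi X)
  rw [S.metric_compat, S.deriv_sub, S.g_symm (S.phi X) (S.cov _ _)] at hφ
  have hQX := S.cov_metric S.xi X (S.Q X)
  rw [hQ, S.g_Q_right X (S.cov S.xi X), S.g_symm (S.Q X)] at hQX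
  have hη := S.deriv_eta S.xi X
  rw [S.cov_xi_xi, S.g_zero_right, add_zero] at hη
  rw [covPhi, S.g_sub_left, S.metric_compat]
  exact self_eq_neg.mp (by
    linear_combination hQX - hφ - S.deriv_mul S.xi (S.eta X) (S.eta X) - 2 * S.eta X * hη)

lemma g_cov_xi_Q (h4 : S.Cond4) (X : S.VF) : S.g (S.cov X S.xi) (S.Q X) = 0 := by
  have h := S.g_covPhi_xi_phi h4 X
  rw [S.covPhi_xi_left, S.g_sub_left, S.g_add_left, S.g_fsmul_left, S.metric_compat,
    S.eta_cov_xi, S.g_symm S.xi, ← S.eta_eq_g_xi, S.eta_phi, S.g_symm X, S.g_phi_self] at h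
  linear_combination h

lemma g_cov_xi_self (h4 : S.Cond4) (X : S.VF) : S.g (S.cov X S.xi) X = 0 := by
  rw [S.g_symm, ← S.g_Q_cov_xi h4, S.g_symm, S.g_cov_xi_Q h4]

end

/-- On a weak nearly Sasakian manifold satisfying condition (4), the tensor
`h = ∇ξ + φ` is skew-symmetric, `h ξ = 0`, `η ∘ h = 0`, the covariant derivative of
`η` is `(∇_X η)(Y) = g((h-φ)X, Y)`, and `η` is a Killing 1-form: `(∇_X η)(X) = 0`. -/
theorem h_skew_and_eta_killing {M : Type*} {n : ℕ}
    (S : WeakNearlySasakianManifold M n) (h4 : S.Cond4) :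
    (∀ X : S.VF, S.g (S.h X) X = 0) ∧
    S.h S.xi = 0 ∧
    (∀ X : S.VF, S.eta (S.h X) = 0) ∧
    (∀ X Y : S.VF, S.deriv X (S.eta Y) - S.eta (S.cov X Y) = S.g (S.hmphi X) Y) ∧
    (∀ X : S.VF, S.deriv X (S.eta X) - S.eta (S.cov X X) = 0) := by
  have hmphi_eq (X : S.VF) : S.hmphi X = S.cov X S.xi := by
    rw [hmphi, h, add_sub_cancel_right]
  have cov_eta_eq (X Y : S.VF) :
      S.deriv X (S.eta Y) - S.eta (S.cov X Y) = S.g (S.cov X S.xi) Y := by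
    rw [S.deriv_eta, add_sub_cancel_left, S.g_symm]
  refine ⟨fun X => ?_, ?_, fun X => ?_, fun X Y => ?_, fun X => ?_⟩
  · rw [h, S.g_add_left, S.g_cov_xi_self h4, S.g_phi_self, add_zero]
  · rw [h, S.cov_xi_xi, S.phi_xi, add_zero]
  · rw [h, S.eta_add, S.eta_cov_xi, S.eta_phi, add_zero]
  · rw [cov_eta_eq, hmphi_eq]
  · rw [cov_eta_eq, S.g_cov_xi_self h4]

end WeakNearlySasakianManifold
end
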